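/- Let w ≥ 1 and let (μ_{1,t}) and (μ_{2,t}) be sequences each with per-step drift at most δ. Set s = t' − 2w + 1 and suppose (1/(2w))·Σ_{t=s}^{t'} (μ_{1,t} − μ_{2,t}) ≥ λ. Then the interleaved averages satisfy (1/w)·Σ_{i=0}^{w−1} μ_{1,s+2i} − (1/w)·Σ_{i=0}^{w−1} μ_{2,s+2i+1} ≥ λ − δ. -/

import Mathlib

/-!
Split the window of `2w` steps into the `w` pairs `(s + 2i, s + 2i + 1)`. In each pair one drift
step per arm replaces `μ₁ (t + 1)` by `μ₁ t` and `μ₂ t` by `μ₂ (t + 1)` at a cost of at most `2δ`;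
dividing the total cost `2wδ` by `2w` leaves `δ`.
-/

open Finset

theorem Finset.sum_range_two_mul {M : Type*} [AddCommMonoid M] (f : ℕ → M) (w : ℕ) :
    ∑ j ∈ range (2 * w), f j = ∑ i ∈ range w, (f (2 * i) + f (2 * i + 1)) := by
  induction w with
  | zero => simp
  | succ w ih =>
    rw [Nat.mul_succ, sum_range_succ, sum_range_succ, sum_range_succ, ih, add_assoc]

theorem Finset.sum_Icc_eq_sum_range {M : Type*} [AddCommMonoid M] (f : ℕ → M) {s t n : ℕ}
    (h : t + 1 = s + n) : ∑ j ∈ Icc s t, f j = ∑ j ∈ range n, f (s + j) := by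
  rw [← Ico_add_one_right_eq_Icc, sum_Ico_eq_sum_range, h, Nat.add_sub_cancel_left]

section Drift

variable {μ₁ μ₂ : ℕ → ℝ} {δ : ℝ}

theorem pair_gap_le (hd1 : ∀ t, |μ₁ t - μ₁ (t + 1)| ≤ δ) (hd2 : ∀ t, |μ₂ t - μ₂ (t + 1)| ≤ δ)
    (t : ℕ) :
    (μ₁ t - μ₂ t) + (μ₁ (t + 1) - μ₂ (t + 1)) ≤ 2 * (μ₁ t - μ₂ (t + 1)) + 2 * δ := by
  have h1 := (abs_le.mp (hd1 t)).1
  have h2 := (abs_le.mp (hd2 t)).1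
  linarith

theorem sum_gap_le_interleaved (hd1 : ∀ t, |μ₁ t - μ₁ (t + 1)| ≤ δ)
    (hd2 : ∀ t, |μ₂ t - μ₂ (t + 1)| ≤ δ) (s w : ℕ) :
    ∑ j ∈ range (2 * w), (μ₁ (s + j) - μ₂ (s + j))
      ≤ 2 * (∑ i ∈ range w, μ₁ (s + 2 * i) - ∑ i ∈ range w, μ₂ (s + 2 * i + 1))
        + 2 * w * δ := by
  calc ∑ j ∈ range (2 * w), (μ₁ (s + j) - μ₂ (s + j))
      = ∑ i ∈ range w, ((μ₁ (s + 2 * i) - μ₂ (s + 2 * i))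
          + (μ₁ (s + 2 * i + 1) - μ₂ (s + 2 * i + 1))) :=
        sum_range_two_mul (fun j => μ₁ (s + j) - μ₂ (s + j)) w
    _ ≤ ∑ i ∈ range w, (2 * (μ₁ (s + 2 * i) - μ₂ (s + 2 * i + 1)) + 2 * δ) :=
        sum_le_sum fun i _ => pair_gap_le hd1 hd2 (s + 2 * i)
    _ = 2 * (∑ i ∈ range w, μ₁ (s + 2 * i) - ∑ i ∈ range w, μ₂ (s + 2 * i + 1))
        + 2 * w * δ := by
      rw [sum_add_distrib, ← mul_sum, sum_sub_distrib, sum_const, card_range, nsmul_eq_mul]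
      ring

end Drift

theorem stmt_5_general (μ₁ μ₂ : ℕ → ℝ) (δ lam : ℝ) (w : ℕ) (hw : 1 ≤ w)
    (hd1 : ∀ t : ℕ, |μ₁ t - μ₁ (t+1)| ≤ δ)
    (hd2 : ∀ t : ℕ, |μ₂ t - μ₂ (t+1)| ≤ δ)
    (t' s : ℕ) (hs : s = t' - (2*w - 1)) (hts : 2*w - 1 ≤ t')
    (havg : (1 / (2*(w:ℝ))) * ∑ t ∈ Icc s t', (μ₁ t - μ₂ t) ≥ lam) :
    (1 / (w:ℝ)) * ∑ i ∈ range w, μ₁ (s + 2*i)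
      - (1 / (w:ℝ)) * ∑ i ∈ range w, μ₂ (s + 2*i + 1) ≥ lam - δ := by
  have hw0 : (0 : ℝ) < w := by exact_mod_cast hw
  have hwindow : ∑ t ∈ Icc s t', (μ₁ t - μ₂ t) = ∑ j ∈ range (2 * w), (μ₁ (s + j) - μ₂ (s + j)) :=
    sum_Icc_eq_sum_range _ (by omega)
  have hbound := sum_gap_le_interleaved hd1 hd2 s w
  rw [hwindow, ge_iff_le, div_mul_eq_mul_div, one_mul, le_div_iff₀ (by positivity)] at havg
  rw [ge_iff_le, ← mul_sub, one_div_mul_eq_div, le_div_iff₀ hw0]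
  linarith

/-- If the average gap between the two arms' means over a window of 2w consecutive steps
ending at t' is at least λ, and each arm drifts by at most δ per step, then the
round-robin (interleaved) sampled averages differ by at least λ − δ. -/
theorem stmt_5 (μ₁ μ₂ : ℕ → ℝ) (δ lam : ℝ) (hδ : 0 < δ) (w : ℕ) (hw : 1 ≤ w)
    (hd1 : ∀ t : ℕ, |μ₁ t - μ₁ (t+1)| ≤ δ)
    (hd2 : ∀ t : ℕ, |μ₂ t - μ₂ (t+1)| ≤ δ)
    (t' s : ℕ) (hs : s = t' - (2*w - 1)) (hts : 2*w - 1 ≤ t')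
    (havg : (1 / (2*(w:ℝ))) * ∑ t ∈ Icc s t', (μ₁ t - μ₂ t) ≥ lam) :
    (1 / (w:ℝ)) * ∑ i ∈ range w, μ₁ (s + 2*i)
      - (1 / (w:ℝ)) * ∑ i ∈ range w, μ₂ (s + 2*i + 1) ≥ lam - δ :=
  stmt_5_general μ₁ μ₂ δ lam w hw hd1 hd2 t' s hs hts havg
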